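/- Let q₀ ≥ q₁ > 0 and let q : [0,∞) → ℝ be continuous with -q₀² ≤ q(t) ≤ -q₁² for all t ≥ 0. Let y : [0,∞) → ℝ be a positive C² solution of y'' = -q·y with y(t) → 0 as t → ∞. Then the logarithmic derivative u(t) = y'(t)/y(t) satisfies -q₀ ≤ u(t) ≤ -q₁ for all t ≥ 0. -/

import Mathlib

/-! The solution `y` is convex and decays, so `y'` increases while staying `≤ 0`, hence is
bounded. For `c > 0` the weighted quantity `φ_c(s) = e^{-cs} (y' + c y)(s)` then tends to `0`, and
`φ_c' = e^{-cs} (y'' - c² y)`. The pinching `q₁² y ≤ y'' ≤ q₀² y` makes `φ_{q₀}` antitone and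
`φ_{q₁}` monotone, hence `y' + q₀ y ≥ 0 ≥ y' + q₁ y`; dividing by `y > 0` gives the bounds. -/

open Filter Set Real Topology

lemma monotoneOn_Ici_of_hasDerivAt_nonneg {f f' : ℝ → ℝ} {a : ℝ}
    (hf : ∀ t, a ≤ t → HasDerivAt f (f' t) t) (hf' : ∀ t, a < t → 0 ≤ f' t) :
    MonotoneOn f (Ici a) :=
  monotoneOn_of_hasDerivWithinAt_nonneg (convex_Ici a)
    (fun t ht => (hf t ht).continuousAt.continuousWithinAt)
    (fun t ht => (hf t (interior_Ici.subset ht).le).hasDerivWithinAt)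
    (fun t ht => hf' t (interior_Ici.subset ht))

lemma antitoneOn_Ici_of_hasDerivAt_nonpos {f f' : ℝ → ℝ} {a : ℝ}
    (hf : ∀ t, a ≤ t → HasDerivAt f (f' t) t) (hf' : ∀ t, a < t → f' t ≤ 0) :
    AntitoneOn f (Ici a) :=
  antitoneOn_of_hasDerivWithinAt_nonpos (convex_Ici a)
    (fun t ht => (hf t ht).continuousAt.continuousWithinAt)
    (fun t ht => (hf t (interior_Ici.subset ht).le).hasDerivWithinAt)
    (fun t ht => hf' t (interior_Ici.subset ht))

lemma deriv_nonpos_of_tendsto_zero {f f' : ℝ → ℝ} {a : ℝ}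
    (hf : ∀ t, a ≤ t → HasDerivAt f (f' t) t) (hf' : MonotoneOn f' (Ici a))
    (hpos : ∀ t, a ≤ t → 0 < f t) (hlim : Tendsto f atTop (𝓝 0)) :
    ∀ t, a ≤ t → f' t ≤ 0 := by
  intro t ht
  by_contra! h
  have hmono : MonotoneOn f (Ici t) :=
    monotoneOn_Ici_of_hasDerivAt_nonneg (fun s hs => hf s (ht.trans hs))
      (fun s hs => h.le.trans (hf' ht (ht.trans hs.le) hs.le))
  have : f t ≤ 0 := ge_of_tendsto hlim <| by
    filter_upwards [eventually_ge_atTop t] with s hs using hmono self_mem_Ici hs hs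
  linarith [hpos t ht]

lemma isBoundedUnder_abs_deriv_of_convex_of_tendsto_zero {y y' y'' : ℝ → ℝ} {a : ℝ}
    (hy : ∀ t, a ≤ t → HasDerivAt y (y' t) t) (hy' : ∀ t, a ≤ t → HasDerivAt y' (y'' t) t)
    (hconvex : ∀ t, a ≤ t → 0 ≤ y'' t) (hpos : ∀ t, a ≤ t → 0 < y t)
    (hlim : Tendsto y atTop (𝓝 0)) :
    IsBoundedUnder (· ≤ ·) atTop (fun s => |y' s|) := by
  have hmono : MonotoneOn y' (Ici a) :=
    monotoneOn_Ici_of_hasDerivAt_nonneg hy' fun t ht => hconvex t ht.le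
  have hnonpos := deriv_nonpos_of_tendsto_zero hy hmono hpos hlim
  refine isBoundedUnder_of_eventually_le (a := |y' a|) ?_
  filter_upwards [eventually_ge_atTop a] with s hs
  have hle : y' a ≤ y' s := hmono self_mem_Ici hs hs
  rw [abs_of_nonpos (hnonpos s hs), abs_of_nonpos (hnonpos a le_rfl)]
  linarith

lemma hasDerivAt_exp_neg_mul_mul_add {y y' : ℝ → ℝ} {y''t t : ℝ} (c : ℝ)
    (hy : HasDerivAt y (y' t) t) (hy' : HasDerivAt y' y''t t) :
    HasDerivAt (fun s => exp (-c * s) * (y' s + c * y s))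
      (exp (-c * t) * (y''t - c ^ 2 * y t)) t := by
  have hexp : HasDerivAt (fun s => exp (-c * s)) (exp (-c * t) * -c) t := by
    simpa using ((hasDerivAt_id t).const_mul (-c)).exp
  exact (hexp.fun_mul (hy'.fun_add (hy.const_mul c))).congr_deriv (by ring)

lemma tendsto_exp_neg_mul_mul_add {y y' : ℝ → ℝ} {c : ℝ} (hc : 0 < c)
    (hy : Tendsto y atTop (𝓝 0)) (hy' : IsBoundedUnder (· ≤ ·) atTop (fun s => |y' s|)) :
    Tendsto (fun s => exp (-c * s) * (y' s + c * y s)) atTop (𝓝 0) := by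
  have hexp : Tendsto (fun s => exp (-c * s)) atTop (𝓝 0) := by
    have hlin : Tendsto (fun s => c * s) atTop atTop := tendsto_id.const_mul_atTop hc
    simpa only [neg_mul, Function.comp_def] using tendsto_exp_neg_atTop_nhds_zero.comp hlin
  have h₁ := hexp.zero_mul_isBoundedUnder_le (g := y') hy'
  have h₂ := hexp.mul (hy.const_mul c)
  simpa [mul_add] using h₁.add h₂

lemma add_mul_nonneg_of_le_sq_mul {y y' y'' : ℝ → ℝ} {a c : ℝ} (hc : 0 < c)
    (hy : ∀ t, a ≤ t → HasDerivAt y (y' t) t) (hy' : ∀ t, a ≤ t → HasDerivAt y' (y'' t) t)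
    (hlim : Tendsto y atTop (𝓝 0)) (hbdd : IsBoundedUnder (· ≤ ·) atTop (fun s => |y' s|))
    (hle : ∀ t, a ≤ t → y'' t ≤ c ^ 2 * y t) :
    ∀ t, a ≤ t → 0 ≤ y' t + c * y t := by
  intro t ht
  have hanti : AntitoneOn (fun s => exp (-c * s) * (y' s + c * y s)) (Ici a) :=
    antitoneOn_Ici_of_hasDerivAt_nonpos
      (fun s hs => hasDerivAt_exp_neg_mul_mul_add c (hy s hs) (hy' s hs))
      (fun s hs => mul_nonpos_of_nonneg_of_nonpos (exp_pos _).le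
        (sub_nonpos.2 (hle s hs.le)))
  have hweighted : 0 ≤ exp (-c * t) * (y' t + c * y t) :=
    le_of_tendsto (tendsto_exp_neg_mul_mul_add hc hlim hbdd) <| by
      filter_upwards [eventually_ge_atTop t] with s hs using hanti ht (ht.trans hs) hs
  exact nonneg_of_mul_nonneg_right hweighted (exp_pos _)

lemma add_mul_nonpos_of_sq_mul_le {y y' y'' : ℝ → ℝ} {a c : ℝ} (hc : 0 < c)
    (hy : ∀ t, a ≤ t → HasDerivAt y (y' t) t) (hy' : ∀ t, a ≤ t → HasDerivAt y' (y'' t) t)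
    (hlim : Tendsto y atTop (𝓝 0)) (hbdd : IsBoundedUnder (· ≤ ·) atTop (fun s => |y' s|))
    (hle : ∀ t, a ≤ t → c ^ 2 * y t ≤ y'' t) :
    ∀ t, a ≤ t → y' t + c * y t ≤ 0 := by
  intro t ht
  have hmono : MonotoneOn (fun s => exp (-c * s) * (y' s + c * y s)) (Ici a) :=
    monotoneOn_Ici_of_hasDerivAt_nonneg
      (fun s hs => hasDerivAt_exp_neg_mul_mul_add c (hy s hs) (hy' s hs))
      (fun s hs => mul_nonneg (exp_pos _).le (sub_nonneg.2 (hle s hs.le)))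
  have hweighted : exp (-c * t) * (y' t + c * y t) ≤ 0 :=
    ge_of_tendsto (tendsto_exp_neg_mul_mul_add hc hlim hbdd) <| by
      filter_upwards [eventually_ge_atTop t] with s hs using hmono ht (ht.trans hs) hs
  exact nonpos_of_mul_nonpos_right hweighted (exp_pos _)

theorem stmt_1_general (q₀ q₁ : ℝ) (hq₁ : 0 < q₁) (hq₀ : q₁ ≤ q₀)
    (q y y' y'' : ℝ → ℝ)
    (hpin : ∀ t, 0 ≤ t → -q₀ ^ 2 ≤ q t ∧ q t ≤ -q₁ ^ 2)
    (hy : ∀ t, 0 ≤ t → HasDerivAt y (y' t) t)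
    (hy' : ∀ t, 0 ≤ t → HasDerivAt y' (y'' t) t)
    (hpos : ∀ t, 0 ≤ t → 0 < y t)
    (heq : ∀ t, 0 ≤ t → y'' t = -(q t) * y t)
    (hlim : Filter.Tendsto y Filter.atTop (nhds 0)) :
    ∀ t, 0 ≤ t → -q₀ ≤ y' t / y t ∧ y' t / y t ≤ -q₁ := by
  have hupper : ∀ t, 0 ≤ t → y'' t ≤ q₀ ^ 2 * y t := fun t ht => by
    rw [heq t ht]; nlinarith [hpin t ht, hpos t ht]
  have hlower : ∀ t, 0 ≤ t → q₁ ^ 2 * y t ≤ y'' t := fun t ht => by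
    rw [heq t ht]; nlinarith [hpin t ht, hpos t ht]
  have hbdd : IsBoundedUnder (· ≤ ·) atTop (fun s => |y' s|) :=
    isBoundedUnder_abs_deriv_of_convex_of_tendsto_zero hy hy'
      (fun t ht => (mul_nonneg (sq_nonneg q₁) (hpos t ht).le).trans (hlower t ht)) hpos hlim
  intro t ht
  have h₀ := add_mul_nonneg_of_le_sq_mul (hq₁.trans_le hq₀) hy hy' hlim hbdd hupper t ht
  have h₁ := add_mul_nonpos_of_sq_mul_le hq₁ hy hy' hlim hbdd hlower t ht
  rw [le_div_iff₀ (hpos t ht), div_le_iff₀ (hpos t ht)]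
  constructor <;> linarith

theorem stmt_1 (q₀ q₁ : ℝ) (hq₁ : 0 < q₁) (hq₀ : q₁ ≤ q₀)
    (q y y' y'' : ℝ → ℝ)
    (hqc : Continuous q)
    (hpin : ∀ t, 0 ≤ t → -q₀ ^ 2 ≤ q t ∧ q t ≤ -q₁ ^ 2)
    (hy : ∀ t, 0 ≤ t → HasDerivAt y (y' t) t)
    (hy' : ∀ t, 0 ≤ t → HasDerivAt y' (y'' t) t)
    (hpos : ∀ t, 0 ≤ t → 0 < y t)
    (heq : ∀ t, 0 ≤ t → y'' t = -(q t) * y t)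
    (hlim : Filter.Tendsto y Filter.atTop (nhds 0)) :
    ∀ t, 0 ≤ t → -q₀ ≤ y' t / y t ∧ y' t / y t ≤ -q₁ :=
  stmt_1_general q₀ q₁ hq₁ hq₀ q y y' y'' hpin hy hy' hpos heq hlim
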